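/- arXiv:2508.18258 — 3 statements merged into one kernel-verified Lean document; each statement's English description precedes it below -/
import Mathlib

section
/- Let C_B > 0 and let (V_k) be a nonnegative sequence satisfying V_k ≤ (1 - 1/√(k+1)) V_{k-1} + C_B/(k+1) for all k ≥ 1. Then there exist a constant M > 0 and an index k₀ such that V_k ≤ M/√(k+1) for all k ≥ k₀. -/
theorem recursion_to_rate (C_B : ℝ) (hC : 0 < C_B) (V : ℕ → ℝ)
    (hV : ∀ k, 0 ≤ V k)
    (hrec : ∀ k, 1 ≤ k →
      V k ≤ (1 - 1 / Real.sqrt (k + 1)) * V (k - 1) + C_B / (k + 1)) :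
    ∃ M > (0 : ℝ), ∃ k₀ : ℕ, ∀ k ≥ k₀, V k ≤ M / Real.sqrt (k + 1) := by
  set M : ℝ := max (2 * C_B) (V 1 * Real.sqrt 2) with hMdef
  have hM2 : 2 * C_B ≤ M := le_max_left _ _
  have hMpos : 0 < M := lt_of_lt_of_le (by linarith) hM2
  refine ⟨M, hMpos, 1, ?_⟩
  intro k hk
  induction k, hk using Nat.le_induction with
  | base =>
    have h2 : Real.sqrt 2 > 0 := Real.sqrt_pos.mpr (by norm_num)
    have hM1 : V 1 * Real.sqrt 2 ≤ M := le_max_right _ _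
    have : ((1:ℕ):ℝ) + 1 = 2 := by norm_num
    rw [this]
    rw [le_div_iff₀ h2]
    linarith
  | succ k hk1 ih =>
    
    set a := Real.sqrt (k + 1) with ha
    set b := Real.sqrt ((k:ℝ) + 1 + 1) with hb
    have ha2 : a ^ 2 = (k:ℝ) + 1 := Real.sq_sqrt (by positivity)
    have hb2 : b ^ 2 = (k:ℝ) + 2 := by
      rw [hb]; rw [Real.sq_sqrt (by positivity)]; ring
    have ha1 : 1 ≤ a := by
      have h := Real.sqrt_le_sqrt (show (1:ℝ) ≤ (k:ℝ) + 1 by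
        have := Nat.cast_nonneg (α := ℝ) k; linarith)
      rw [ha]; simpa using h
    have hab : a ≤ b := Real.sqrt_le_sqrt (by linarith)
    have hbpos : 0 < b := by linarith
    have hapos : 0 < a := by linarith
    have hdiff : (b - a) * (b + a) = 1 := by nlinarith [ha2, hb2]
    have hrec' := hrec (k + 1) (by omega)
    have hsimp : ((k + 1 : ℕ) : ℝ) + 1 = (k:ℝ) + 1 + 1 := by push_cast; ring
    rw [hsimp] at hrec' ⊢
    simp only [Nat.add_sub_cancel] at hrec'
    have hcoef : 0 ≤ 1 - 1 / b := by
      have : 1 / b ≤ 1 := by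
        rw [div_le_one hbpos]; linarith
      linarith
    have step1 : V (k + 1) ≤ (1 - 1 / b) * (M / a) + C_B / ((k:ℝ) + 1 + 1) := by
      calc V (k + 1) ≤ (1 - 1 / b) * V k + C_B / ((k:ℝ) + 1 + 1) := hrec'
        _ ≤ (1 - 1 / b) * (M / a) + C_B / ((k:ℝ) + 1 + 1) := by
            gcongr
    have key : (1 - 1 / b) * (M / a) + C_B / ((k:ℝ) + 1 + 1) ≤ M / b := by
      have h1 : b - a ≤ 1 / 2 := by nlinarith
      have h2 : C_B * a ≤ M * b * (a - b + 1) := by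
        have t1 : M * b * (1/2) ≤ M * b * (a - b + 1) :=
          mul_le_mul_of_nonneg_left (by linarith) (by positivity)
        have t2 : 2 * C_B * b ≤ M * b :=
          mul_le_mul_of_nonneg_right hM2 hbpos.le
        have t3 : C_B * a ≤ C_B * b :=
          mul_le_mul_of_nonneg_left hab hC.le
        linarith
      have expand : M / b - ((1 - 1 / b) * (M / a) + C_B / ((k:ℝ) + 1 + 1)) =
          (M * b * (a - b + 1) - C_B * a) / (a * b ^ 2) := by
        rw [show (k:ℝ) + 1 + 1 = b ^ 2 by linarith]
        field_simp
        ring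
      have hnn : 0 ≤ (M * b * (a - b + 1) - C_B * a) / (a * b ^ 2) :=
        div_nonneg (by linarith) (by positivity)
      linarith
    linarith
end

section
/- Let g ∈ ℝ^d be a random vector, m ∈ ℝ^d fixed signs, v ∈ ℝ^d with 0 ≤ v_i ≤ 2G² for each i, ε > 0, and ∇ ∈ ℝ^d with E[g_i] = ∇_i. Suppose for each i, E[|g_i| · 1{sign(m_i) ≠ sign(∇_i)}] ≤ δ_i. Then Σ_i ∇_i |g_i| sign(m_i) / (√(v_i) + ε) has expectation at least ‖∇‖² / (√2 G + ε) − (2/ε) Σ_i |∇_i| δ_i. -/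
open MeasureTheory

open Classical in
theorem Ak_lower_bound {Ω : Type*} [MeasurableSpace Ω]
    (P : Measure Ω) [IsProbabilityMeasure P] (d : ℕ)
    (g : Ω → Fin d → ℝ) (m v grad δ : Fin d → ℝ) (G ε : ℝ)
    (hε : 0 < ε) (hG : 0 ≤ G)
    (hv : ∀ i, 0 ≤ v i ∧ v i ≤ 2 * G ^ 2)
    (hgi : ∀ i, Integrable (fun ω => g ω i) P)
    (habs : ∀ i, Integrable (fun ω => |g ω i|) P)
    (hmean : ∀ i, ∫ ω, g ω i ∂P = grad i)
    (hmis : ∀ i, ∫ ω, |g ω i| *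
        (if Real.sign (m i) ≠ Real.sign (grad i) then (1 : ℝ) else 0) ∂P ≤ δ i) :
    (∑ i, (grad i) ^ 2) / (Real.sqrt 2 * G + ε) - (2 / ε) * ∑ i, |grad i| * δ i
      ≤ ∫ ω, ∑ i, grad i * |g ω i| * Real.sign (m i) / (Real.sqrt (v i) + ε) ∂P := by
  set C := Real.sqrt 2 * G + ε with hC
  have hCpos : 0 < C := by
    have := Real.sqrt_nonneg 2
    nlinarith
  have hεC : ε ≤ C := by
    have := Real.sqrt_nonneg 2
    nlinarith
  have hDpos : ∀ i, 0 < Real.sqrt (v i) + ε :=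
    fun i => lt_of_lt_of_le hε (le_add_of_nonneg_left (Real.sqrt_nonneg _))
  have hDup : ∀ i, Real.sqrt (v i) + ε ≤ C := by
    intro i
    have h1 : Real.sqrt (v i) ≤ Real.sqrt (2 * G ^ 2) := Real.sqrt_le_sqrt (hv i).2
    have h2 : Real.sqrt (2 * G ^ 2) = Real.sqrt 2 * G := by
      rw [Real.sqrt_mul (by norm_num), Real.sqrt_sq hG]
    rw [hC]; linarith
  have hrw : ∀ i ω, grad i * |g ω i| * Real.sign (m i) / (Real.sqrt (v i) + ε)
      = (grad i * Real.sign (m i) / (Real.sqrt (v i) + ε)) * |g ω i| := by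
    intro i ω; ring
  have hint : ∀ i, Integrable (fun ω =>
      grad i * |g ω i| * Real.sign (m i) / (Real.sqrt (v i) + ε)) P := by
    intro i
    simp only [hrw]
    exact (habs i).const_mul _
  rw [integral_finset_sum _ (fun i _ => hint i)]
  rw [Finset.sum_div, Finset.mul_sum, ← Finset.sum_sub_distrib]
  apply Finset.sum_le_sum
  intro i _
  set I := ∫ ω, |g ω i| ∂P with hIdef
  have hterm : ∫ ω, grad i * |g ω i| * Real.sign (m i) / (Real.sqrt (v i) + ε) ∂P
      = (grad i * Real.sign (m i) / (Real.sqrt (v i) + ε)) * I := by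
    simp only [hrw]
    rw [integral_const_mul]
  rw [hterm]
  have hInn : 0 ≤ I := integral_nonneg (fun ω => abs_nonneg _)
  have hIg : |grad i| ≤ I := by
    rw [← hmean i, hIdef]
    have := norm_integral_le_integral_norm (μ := P) (fun ω => g ω i)
    simpa [Real.norm_eq_abs] using this
  set D := Real.sqrt (v i) + ε with hDdef
  have hDp : 0 < D := hDpos i
  have hDC : D ≤ C := hDup i
  have hεD : ε ≤ D := le_add_of_nonneg_left (Real.sqrt_nonneg _)
  by_cases h : Real.sign (m i) = Real.sign (grad i)
  · -- matched sign
    have hδ : 0 ≤ δ i := by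
      have := hmis i
      simpa [h] using this
    by_cases hg0 : grad i = 0
    · simp [hg0]
    · have hsg : grad i * Real.sign (m i) = |grad i| := by
        rw [h]
        rcases lt_trichotomy (grad i) 0 with hlt | heq | hgt
        · rw [Real.sign_of_neg hlt, abs_of_neg hlt]; ring
        · exact absurd heq hg0
        · rw [Real.sign_of_pos hgt, abs_of_pos hgt]; ring
      have hnum : grad i ^ 2 ≤ |grad i| * I :=
        calc grad i ^ 2 = |grad i| * |grad i| := by rw [abs_mul_abs_self]; ring
          _ ≤ |grad i| * I := mul_le_mul_of_nonneg_left hIg (abs_nonneg _)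
      have key : grad i ^ 2 / C ≤ |grad i| * I / D :=
        div_le_div₀ (mul_nonneg (abs_nonneg _) hInn) hnum hDp hDC
      have e : grad i * Real.sign (m i) / D * I = |grad i| * I / D := by
        rw [hsg]; ring
      have h2 : 0 ≤ 2 / ε * (|grad i| * δ i) :=
        mul_nonneg (by positivity) (mul_nonneg (abs_nonneg _) hδ)
      have e2 : 2 / ε * (|grad i| * δ i) = 2 * (|grad i| * I / D) * 0 + 2 / ε * (|grad i| * δ i) := by ring
      have h3 : grad i ^ 2 / C - 2 / ε * (|grad i| * δ i) ≤ grad i ^ 2 / C := by linarith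
      rw [e]
      linarith
  · -- mismatched sign
    have hδI : I ≤ δ i := by
      have := hmis i
      simpa [h] using this
    have hδ : 0 ≤ δ i := hInn.trans hδI
    have hs : |Real.sign (m i)| ≤ 1 := by
      rcases Real.sign_apply_eq (m i) with h1 | h1 | h1 <;> simp [h1]
    have hb : -|grad i| ≤ grad i * Real.sign (m i) := by
      have h1 : |grad i * Real.sign (m i)| ≤ |grad i| := by
        rw [abs_mul]
        exact mul_le_of_le_one_right (abs_nonneg _) hs
      have := neg_abs_le (grad i * Real.sign (m i))
      linarith
    have stepA : grad i ^ 2 / C ≤ |grad i| * δ i / ε := by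
      apply div_le_div₀ (mul_nonneg (abs_nonneg _) hδ) _ hε hεC
      calc grad i ^ 2 = |grad i| * |grad i| := by rw [abs_mul_abs_self]; ring
        _ ≤ |grad i| * I := mul_le_mul_of_nonneg_left hIg (abs_nonneg _)
        _ ≤ |grad i| * δ i := mul_le_mul_of_nonneg_left hδI (abs_nonneg _)
    have stepB : -(|grad i| * δ i) / ε ≤ grad i * Real.sign (m i) * I / D := by
      rw [div_le_div_iff₀ hε hDp]
      have h1 : -|grad i| * (I * ε) ≤ grad i * Real.sign (m i) * (I * ε) :=
        mul_le_mul_of_nonneg_right hb (mul_nonneg hInn hε.le)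
      have h2 : |grad i| * I * ε ≤ |grad i| * δ i * ε :=
        mul_le_mul_of_nonneg_right (mul_le_mul_of_nonneg_left hδI (abs_nonneg _)) hε.le
      have h3 : 0 ≤ |grad i| * δ i * (D - ε) :=
        mul_nonneg (mul_nonneg (abs_nonneg _) hδ) (by linarith)
      nlinarith
    have e : grad i * Real.sign (m i) / D * I = grad i * Real.sign (m i) * I / D := by
      ring
    have e2 : -(|grad i| * δ i) / ε = -(|grad i| * δ i / ε) := by ring
    rw [e2] at stepB
    have e3 : (2:ℝ) / ε * (|grad i| * δ i) = 2 * (|grad i| * δ i / ε) := by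
      field_simp
    rw [e, e3]
    linarith
end

section
/- Suppose a sequence of nonnegative reals (F_k) satisfies F_{k+1} ≤ F_k − c w_k a_k + C₁ w_k / (k+1)^{1/4} + C₂ w_k², where w_k = η/(k+1)^{3/4}, c, C₁, C₂, η > 0, F_k ≥ F* for all k, and a_k ≥ 0. Then min_{0 ≤ k < K} a_k = O(log K / K^{1/4}) as K → ∞; explicitly, min_{0 ≤ k < K} a_k ≤ [F₀ − F* + C₁ η (1 + log K) + C₂ η² ζ(3/2)] / (4 c η ((K+1)^{1/4} − 1)) for K ≥ 2. -/
/-!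
Telescoping the descent inequality gives `(min_{k<K} a_k) · ∑_{k<K} w_k ≤ F₀ - F* + ∑_{k<K} e_k`
for the step sizes `w_k = c η (k+1)^{-3/4}` and errors
`e_k = C₁ η / (k+1) + C₂ η² / (k+1)^{3/2}`. Comparing with `∫₁^{K+1} x^{-3/4} dx` gives
`∑ w_k ≥ 4 c η ((K+1)^{1/4} - 1)`, while the error sum is at most a harmonic sum, `≤ 1 + log K`,
plus a partial sum of `ζ(3/2)`.
-/

open Finset Real

theorem exists_mul_sum_le_of_descent {F a w e : ℕ → ℝ} {Fstar : ℝ}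
    (hF : ∀ k, Fstar ≤ F k) (hw : ∀ k, 0 ≤ w k)
    (hrec : ∀ k, F (k + 1) ≤ F k - w k * a k + e k) {K : ℕ} (hK : 0 < K) :
    ∃ k ∈ range K, a k * ∑ i ∈ range K, w i ≤ F 0 - Fstar + ∑ i ∈ range K, e i := by
  obtain ⟨k, hk, hmin⟩ := exists_min_image (range K) a (nonempty_range_iff.2 hK.ne')
  refine ⟨k, hk, ?_⟩
  have htelescope : ∑ i ∈ range K, w i * a i ≤ F 0 - F K + ∑ i ∈ range K, e i := by
    rw [← sum_range_sub' F, ← sum_add_distrib]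
    exact sum_le_sum fun i _ => by linarith [hrec i]
  calc a k * ∑ i ∈ range K, w i = ∑ i ∈ range K, w i * a k := by
        rw [mul_sum]; simp only [mul_comm]
    _ ≤ ∑ i ∈ range K, w i * a i :=
        sum_le_sum fun i hi => mul_le_mul_of_nonneg_left (hmin i hi) (hw i)
    _ ≤ F 0 - Fstar + ∑ i ∈ range K, e i := by linarith [hF K]

theorem sum_range_inv_add_one_le_one_add_log (K : ℕ) :
    ∑ k ∈ range K, ((k : ℝ) + 1)⁻¹ ≤ 1 + log K := by
  simpa [harmonic] using harmonic_le_one_add_log K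

theorem rpow_one_sub_sub_one_div_le_sum {s : ℝ} (hs : 0 ≤ s) (hs1 : s ≠ 1) (K : ℕ) :
    (((K : ℝ) + 1) ^ (1 - s) - 1) / (1 - s) ≤ ∑ k ∈ range K, ((k : ℝ) + 1) ^ (-s) := by
  have hanti : AntitoneOn (fun x : ℝ => x ^ (-s)) (Set.Icc 1 (1 + K)) := fun x hx y _ hxy =>
    rpow_le_rpow_of_nonpos (by linarith [hx.1]) hxy (neg_nonpos.2 hs)
  have hint := hanti.integral_le_sum
  rw [integral_rpow (Or.inr ⟨by contrapose! hs1; linarith, by simp⟩)] at hint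
  simpa [add_comm, sub_eq_add_neg] using hint

theorem riemannZeta_ofReal_re_eq_tsum {s : ℝ} (hs : 1 < s) :
    (riemannZeta s).re = ∑' n : ℕ, 1 / ((n : ℝ) + 1) ^ s := by
  rw [zeta_eq_tsum_one_div_nat_add_one_cpow (by simpa using hs), ← Complex.ofReal_re (∑' _, _),
    Complex.ofReal_tsum]
  congr 2 with n
  rw [Complex.ofReal_div, Complex.ofReal_cpow (by positivity)]
  push_cast
  rfl

theorem sum_range_one_div_rpow_le_riemannZeta_re {s : ℝ} (hs : 1 < s) (K : ℕ) :
    ∑ k ∈ range K, 1 / ((k : ℝ) + 1) ^ s ≤ (riemannZeta s).re := by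
  rw [riemannZeta_ofReal_re_eq_tsum hs]
  refine Summable.sum_le_tsum _ (fun k _ => by positivity) ?_
  simpa using (summable_nat_add_iff 1).2 (summable_one_div_nat_rpow.2 hs)

theorem four_mul_rpow_quarter_sub_one_le_sum (K : ℕ) :
    4 * (((K : ℝ) + 1) ^ ((1 : ℝ) / 4) - 1) ≤ ∑ k ∈ range K, 1 / ((k : ℝ) + 1) ^ ((3 : ℝ) / 4) := by
  have h := rpow_one_sub_sub_one_div_le_sum (s := 3 / 4) (by norm_num) (by norm_num) K
  simp only [rpow_neg (Nat.cast_add_one_pos _).le, one_div] at h ⊢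
  convert h using 1
  norm_num
  ring

theorem sum_range_error_le (C₁ C₂ η : ℝ) (hC₁ : 0 ≤ C₁) (hC₂ : 0 ≤ C₂) (hη : 0 ≤ η) (K : ℕ) :
    ∑ k ∈ range K, (C₁ * (η / ((k : ℝ) + 1) ^ ((3 : ℝ) / 4)) / ((k : ℝ) + 1) ^ ((1 : ℝ) / 4)
        + C₂ * (η / ((k : ℝ) + 1) ^ ((3 : ℝ) / 4)) ^ 2)
      ≤ C₁ * η * (1 + log K) + C₂ * η ^ 2 * (riemannZeta ((3 : ℂ) / 2)).re := by
  have hterm : ∀ k : ℕ, C₁ * (η / ((k : ℝ) + 1) ^ ((3 : ℝ) / 4)) / ((k : ℝ) + 1) ^ ((1 : ℝ) / 4)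
        + C₂ * (η / ((k : ℝ) + 1) ^ ((3 : ℝ) / 4)) ^ 2
      = C₁ * η * ((k : ℝ) + 1)⁻¹ + C₂ * η ^ 2 * (1 / ((k : ℝ) + 1) ^ ((3 : ℝ) / 2)) := by
    intro k
    have ht : (0 : ℝ) < (k : ℝ) + 1 := Nat.cast_add_one_pos k
    have hprod : ((k : ℝ) + 1) ^ ((3 : ℝ) / 4) * ((k : ℝ) + 1) ^ ((1 : ℝ) / 4) = (k : ℝ) + 1 := by
      rw [← rpow_add ht]; norm_num
    have hsq : (((k : ℝ) + 1) ^ ((3 : ℝ) / 4)) ^ 2 = ((k : ℝ) + 1) ^ ((3 : ℝ) / 2) := by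
      rw [← rpow_natCast, ← rpow_mul ht.le]; norm_num
    rw [div_pow, hsq, mul_div_assoc, div_div, hprod]
    ring
  have hzeta := sum_range_one_div_rpow_le_riemannZeta_re (s := 3 / 2) (by norm_num) K
  push_cast at hzeta
  rw [sum_congr rfl fun k _ => hterm k, sum_add_distrib, ← mul_sum, ← mul_sum]
  gcongr
  exact sum_range_inv_add_one_le_one_add_log K

theorem abstract_convergence (F a : ℕ → ℝ) (Fstar c C₁ C₂ η : ℝ)
    (hc : 0 < c) (hC₁ : 0 < C₁) (hC₂ : 0 < C₂) (hη : 0 < η)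
    (hFstar : ∀ k, Fstar ≤ F k) (ha : ∀ k, 0 ≤ a k)
    (hrec : ∀ k : ℕ,
      F (k + 1) ≤ F k - c * (η / ((k : ℝ) + 1) ^ ((3 : ℝ) / 4)) * a k
        + C₁ * (η / ((k : ℝ) + 1) ^ ((3 : ℝ) / 4)) / ((k : ℝ) + 1) ^ ((1 : ℝ) / 4)
        + C₂ * (η / ((k : ℝ) + 1) ^ ((3 : ℝ) / 4)) ^ 2) :
    ∀ K : ℕ, 2 ≤ K → ∃ k ∈ Finset.range K,
      a k ≤ (F 0 - Fstar + C₁ * η * (1 + Real.log K)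
              + C₂ * η ^ 2 * (riemannZeta ((3 : ℂ) / 2)).re)
            / (4 * c * η * (((K : ℝ) + 1) ^ ((1 : ℝ) / 4) - 1)) := by
  intro K hK
  obtain ⟨k, hk, hdescent⟩ := exists_mul_sum_le_of_descent
    (a := a) (w := fun k => c * (η / ((k : ℝ) + 1) ^ ((3 : ℝ) / 4)))
    (e := fun k => C₁ * (η / ((k : ℝ) + 1) ^ ((3 : ℝ) / 4)) / ((k : ℝ) + 1) ^ ((1 : ℝ) / 4)
      + C₂ * (η / ((k : ℝ) + 1) ^ ((3 : ℝ) / 4)) ^ 2)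
    hFstar (fun k => by positivity) (fun k => by linarith [hrec k]) (by omega : 0 < K)
  refine ⟨k, hk, ?_⟩
  have hstep : 4 * c * η * (((K : ℝ) + 1) ^ ((1 : ℝ) / 4) - 1)
      ≤ ∑ i ∈ range K, c * (η / ((i : ℝ) + 1) ^ ((3 : ℝ) / 4)) := by
    simp only [div_eq_mul_one_div η, ← mul_assoc, ← mul_sum]
    linarith [mul_le_mul_of_nonneg_left (four_mul_rpow_quarter_sub_one_le_sum K) (mul_pos hc hη).le]
  have hpos : 0 < ((K : ℝ) + 1) ^ ((1 : ℝ) / 4) - 1 := by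
    rw [sub_pos]
    exact one_lt_rpow (by norm_cast; omega) (by norm_num)
  rw [le_div_iff₀ (by positivity)]
  calc a k * (4 * c * η * (((K : ℝ) + 1) ^ ((1 : ℝ) / 4) - 1))
      ≤ a k * ∑ i ∈ range K, c * (η / ((i : ℝ) + 1) ^ ((3 : ℝ) / 4)) :=
        mul_le_mul_of_nonneg_left hstep (ha k)
    _ ≤ _ := hdescent
    _ ≤ _ := by linarith [sum_range_error_le C₁ C₂ η hC₁.le hC₂.le hη.le K]
end
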